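/- Let f and f̂ be probability densities represented by two tree-structured SPNs over an n-dimensional product domain that have the same structure, with k mixing weights and e leaves in total. Let N be a subset of the leaf indices, and let ε′, α ∈ [0,1]. Suppose every pair of corresponding leaves fᵢ, f̂ᵢ with i ∉ N satisfies TV(fᵢ, f̂ᵢ) ≤ ε′, and every pair of corresponding mixing weights satisfies |ŵⱼ − wⱼ| ≤ α. Then TV(f, f̂) ≤ Σ_{i ∈ N} Wᵢ + nε′ + kα/2, where Wᵢ denotes the path weight of the i-th leaf in f. -/

import Mathlib

open MeasureTheory

inductive SPN (n : ℕ) (X : Type) : Type where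
  | leaf (d : ℕ) (emb : Fin d ↪ Fin n) (g : (Fin d → X) → ℝ)
  | prod (m : ℕ) (children : Fin m → SPN n X)
  | sum (m : ℕ) (w : Fin m → ℝ) (children : Fin m → SPN n X)

namespace SPN

variable {n : ℕ} {X : Type}

def scope : SPN n X → Finset (Fin n)
  | .leaf _ emb _ => Finset.univ.map emb
  | .prod _ c => Finset.univ.biUnion fun i => (c i).scope
  | .sum _ _ c => Finset.univ.biUnion fun i => (c i).scope

noncomputable def density : SPN n X → (Fin n → X) → ℝ
  | .leaf _ emb g => fun x => g fun j => x (emb j)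
  | .prod _ c => fun x => ∏ i, (c i).density x
  | .sum _ w c => fun x => ∑ i, w i * (c i).density x

def numLeaves : SPN n X → ℕ
  | .leaf _ _ _ => 1
  | .prod _ c => ∑ i, (c i).numLeaves
  | .sum _ _ c => ∑ i, (c i).numLeaves

def numWeights : SPN n X → ℕ
  | .leaf _ _ _ => 0
  | .prod _ c => ∑ i, (c i).numWeights
  | .sum m _ c => m + ∑ i, (c i).numWeights

def LeafT (n : ℕ) (X : Type) : Type := Σ d : ℕ, (Fin d ↪ Fin n) × ((Fin d → X) → ℝ)

instance : Inhabited (LeafT n X) := ⟨⟨0, Function.Embedding.ofIsEmpty, fun _ => 0⟩⟩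

def leaves : SPN n X → List (LeafT n X)
  | .leaf d emb g => [⟨d, emb, g⟩]
  | .prod _ c => (List.ofFn fun i => (c i).leaves).flatten
  | .sum _ _ c => (List.ofFn fun i => (c i).leaves).flatten

noncomputable def pathWeights : SPN n X → List ℝ
  | .leaf _ _ _ => [1]
  | .prod _ c => (List.ofFn fun i => (c i).pathWeights).flatten
  | .sum _ w c => (List.ofFn fun i => ((c i).pathWeights).map fun r => w i * r).flatten

def weightsList : SPN n X → List ℝ
  | .leaf _ _ _ => []
  | .prod _ c => (List.ofFn fun i => (c i).weightsList).flatten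
  | .sum _ w c => (List.ofFn fun i => w i) ++ (List.ofFn fun i => (c i).weightsList).flatten

variable [MeasurableSpace X]

def WF (ν : Measure X) [SigmaFinite ν] : SPN n X → Prop
  | .leaf d _ g => (∀ y, 0 ≤ g y) ∧ Measurable g ∧
      ∫ y, g y ∂(Measure.pi fun _ : Fin d => ν) = 1
  | .prod m c => 0 < m ∧ (∀ i, (c i).WF ν) ∧
      ∀ i j, i ≠ j → Disjoint ((c i).scope) ((c j).scope)
  | .sum m w c => 0 < m ∧ (∀ i, (c i).WF ν) ∧ (∀ i j, (c i).scope = (c j).scope) ∧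
      (∀ i, 0 ≤ w i) ∧ ∑ i, w i = 1

inductive SameStruct : SPN n X → SPN n X → Prop
  | leaf (d : ℕ) (emb : Fin d ↪ Fin n) (g g' : (Fin d → X) → ℝ) :
      SameStruct (.leaf d emb g) (.leaf d emb g')
  | prod (m : ℕ) (c c' : Fin m → SPN n X) (h : ∀ i, SameStruct (c i) (c' i)) :
      SameStruct (.prod m c) (.prod m c')
  | sum (m : ℕ) (w w' : Fin m → ℝ) (c c' : Fin m → SPN n X)
      (h : ∀ i, SameStruct (c i) (c' i)) :
      SameStruct (.sum m w c) (.sum m w' c')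

noncomputable def leafTV (ν : Measure X) [SigmaFinite ν] (L L' : LeafT n X) : ℝ :=
  if h : L'.1 = L.1 then
    (1/2) * ∫ y, |L.2.2 y - L'.2.2 fun j => y (Fin.cast h j)|
      ∂(Measure.pi fun _ : Fin L.1 => ν)
  else 1

noncomputable def tv (ν : Measure X) [SigmaFinite ν] (f g : (Fin n → X) → ℝ) : ℝ :=
  (1/2) * ∫ x, |f x - g x| ∂(Measure.pi fun _ : Fin n => ν)

end SPN

/-!
Compare the two networks node by node, measuring the distance between two nodes by the L¹ norm
of the difference of their densities, integrated over the node's scope only (a marginal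
integral, uniform in the remaining coordinates). At a product node the children have disjoint
scopes, so telescoping `|∏ aᵢ - ∏ bᵢ|` and integrating one factor at a time (Fubini) bounds the
distance by the sum of the children's distances; at a sum node
`|∑ wᵢ aᵢ - ∑ ŵᵢ bᵢ| ≤ ∑ wᵢ |aᵢ - bᵢ| + ∑ |ŵᵢ - wᵢ| bᵢ`. Unwinding the recursion,
`‖f - f̂‖₁ ≤ ∑ᵢ Wᵢ ‖fᵢ - f̂ᵢ‖₁ + ∑ⱼ |ŵⱼ - wⱼ|`. A leaf in `N` contributes at most `2 Wᵢ`, any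
other leaf at most `2 ε' Wᵢ dᵢ` where `dᵢ` is its dimension (a `0`-dimensional leaf is the
constant `1`), and `∑ᵢ Wᵢ dᵢ ≤ n` because product nodes split their scope and the weights of a
sum node add up to `1`.
-/

open Finset Function
open scoped ENNReal

theorem abs_mul_sub_mul_le {a b p q : ℝ} (ha : 0 ≤ a) (hq : 0 ≤ q) :
    |a * p - b * q| ≤ a * |p - q| + |a - b| * q :=
  calc |a * p - b * q| = |a * (p - q) + (a - b) * q| := by ring_nf
    _ ≤ |a * (p - q)| + |(a - b) * q| := abs_add_le _ _
    _ = a * |p - q| + |a - b| * q := by rw [abs_mul, abs_mul, abs_of_nonneg ha, abs_of_nonneg hq]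

namespace List

variable {α β γ : Type*}

theorem zip_ofFn {m : ℕ} (f : Fin m → α) (g : Fin m → β) :
    (ofFn f).zip (ofFn g) = ofFn fun i => (f i, g i) :=
  ext_getElem (by simp) fun i _ _ => by simp

theorem zip_flatten_ofFn {m : ℕ} (F : Fin m → List α) (G : Fin m → List β)
    (h : ∀ i, (F i).length = (G i).length) :
    (ofFn F).flatten.zip (ofFn G).flatten = (ofFn fun i => (F i).zip (G i)).flatten := by
  induction m with
  | zero => simp
  | succ m ih =>
    simp only [ofFn_succ, flatten_cons, zip_append (h 0)]
    rw [ih _ _ fun i => h i.succ]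

theorem sum_map_zip_flatten_ofFn [AddCommMonoid γ] (f : α × β → γ) {m : ℕ}
    (F : Fin m → List α) (G : Fin m → List β) (h : ∀ i, (F i).length = (G i).length) :
    (((ofFn F).flatten.zip (ofFn G).flatten).map f).sum = ∑ i, (((F i).zip (G i)).map f).sum := by
  rw [zip_flatten_ofFn F G h, map_flatten, sum_flatten, map_ofFn, map_ofFn, sum_ofFn]
  rfl

theorem getElem!_zip [Inhabited α] [Inhabited β] {l : List α} {l' : List β} {i : ℕ}
    (hi : i < l.length) (hi' : i < l'.length) : (l.zip l')[i]! = (l[i]!, l'[i]!) := by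
  rw [getElem!_pos (l.zip l') i (by simpa using ⟨hi, hi'⟩), getElem_zip, getElem!_pos l i hi,
    getElem!_pos l' i hi']

theorem sum_map_zip_eq_sum_range [AddCommMonoid γ] [Inhabited α] [Inhabited β]
    (f : α × β → γ) {l : List α} {l' : List β} (h : l.length = l'.length) :
    ((l.zip l').map f).sum = ∑ i ∈ Finset.range l.length, f (l[i]!, l'[i]!) := by
  induction l generalizing l' with
  | nil => simp
  | cons a l ih =>
    obtain _ | ⟨b, l'⟩ := l'
    · simp at h
    · simp only [zip_cons_cons, map_cons, sum_cons, length_cons, Finset.sum_range_succ',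
        getElem!_cons_succ, getElem!_cons_zero, ih (Nat.succ_inj.mp h), add_comm]

end List

namespace MeasureTheory

section Marginal

variable {δ : Type*} {X : δ → Type*} [∀ i, MeasurableSpace (X i)] {μ : ∀ i, Measure (X i)}
  [DecidableEq δ] {s t : Finset δ}

theorem lmarginal_add_left {f : (∀ i, X i) → ℝ≥0∞} (hf : Measurable f)
    (g : (∀ i, X i) → ℝ≥0∞) (x : ∀ i, X i) :
    (∫⋯∫⁻_s, (fun y => f y + g y) ∂μ) x = (∫⋯∫⁻_s, f ∂μ) x + (∫⋯∫⁻_s, g ∂μ) x :=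
  lintegral_add_left (hf.comp measurable_updateFinset) _

theorem lmarginal_finset_sum {κ : Type*} (u : Finset κ) {f : κ → (∀ i, X i) → ℝ≥0∞}
    (hf : ∀ i ∈ u, Measurable (f i)) (x : ∀ i, X i) :
    (∫⋯∫⁻_s, (fun y => ∑ i ∈ u, f i y) ∂μ) x = ∑ i ∈ u, (∫⋯∫⁻_s, f i ∂μ) x :=
  lintegral_finsetSum' u fun i hi => ((hf i hi).comp measurable_updateFinset).aemeasurable

theorem lmarginal_mul_left_of_dependsOn {φ ψ : (∀ i, X i) → ℝ≥0∞}
    (hφ : DependsOn φ (↑s)ᶜ) (hψ : Measurable ψ) (x : ∀ i, X i) :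
    (∫⋯∫⁻_s, (fun y => φ y * ψ y) ∂μ) x = φ x * (∫⋯∫⁻_s, ψ ∂μ) x := by
  have hφx : ∀ y, φ (updateFinset x s y) = φ x := fun y =>
    hφ fun i hi => by simp [updateFinset, show i ∉ s from hi]
  simp only [lmarginal, hφx]
  exact lintegral_const_mul _ (hψ.comp measurable_updateFinset)

theorem lmarginal_const_mul (c : ℝ≥0∞) {ψ : (∀ i, X i) → ℝ≥0∞} (hψ : Measurable ψ)
    (x : ∀ i, X i) :
    (∫⋯∫⁻_s, (fun y => c * ψ y) ∂μ) x = c * (∫⋯∫⁻_s, ψ ∂μ) x :=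
  lmarginal_mul_left_of_dependsOn ((dependsOn_const c).mono (Set.empty_subset _)) hψ x

variable [∀ i, SigmaFinite (μ i)]

theorem lmarginal_map_univ_comp {δ' : Type*} [Fintype δ'] [DecidableEq δ'] (e : δ' ↪ δ)
    {f : (∀ i, X (e i)) → ℝ≥0∞} (hf : Measurable f) (x : ∀ i, X i) :
    (∫⋯∫⁻_(univ.map e), f ∘ (· ∘' e) ∂μ) x = ∫⁻ y, f y ∂Measure.pi fun i => μ (e i) := by
  rw [map_eq_image, lmarginal_image e.injective univ hf, lmarginal_univ]

theorem lintegral_le_of_lmarginal_univ_le [Fintype δ] {f : (∀ i, X i) → ℝ≥0∞} {C : ℝ≥0∞}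
    (h : ∀ x, (∫⋯∫⁻_univ, f ∂μ) x ≤ C) : ∫⁻ x, f x ∂Measure.pi μ ≤ C := by
  rcases isEmpty_or_nonempty (∀ i, X i) with hX | hX
  · simp
  · obtain ⟨x⟩ := hX
    simpa using h x

end Marginal

section Density

variable {δ : Type*} {X : δ → Type*} [∀ i, MeasurableSpace (X i)] {μ : ∀ i, Measure (X i)}
  [DecidableEq δ] {s t : Finset δ}

/-- `φ` is a probability density of the coordinates in `s`, whatever the other coordinates. -/
structure IsDensityOn (μ : ∀ i, Measure (X i)) (s : Finset δ) (φ : (∀ i, X i) → ℝ) : Prop where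
  nonneg : ∀ x, 0 ≤ φ x
  measurable : Measurable φ
  dependsOn : DependsOn φ s
  lmarginal_eq_one : ∫⋯∫⁻_s, (fun x => ENNReal.ofReal (φ x)) ∂μ = 1

namespace IsDensityOn

variable {φ ψ : (∀ i, X i) → ℝ}

theorem measurable_ofReal (hφ : IsDensityOn μ s φ) : Measurable fun x => ENNReal.ofReal (φ x) :=
  ENNReal.measurable_ofReal.comp hφ.measurable

theorem measurable_ofReal_abs_sub (hφ : IsDensityOn μ s φ) (hψ : IsDensityOn μ t ψ) :
    Measurable fun x => ENNReal.ofReal |φ x - ψ x| :=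
  ENNReal.measurable_ofReal.comp (hφ.measurable.sub hψ.measurable).abs

theorem dependsOn_ofReal (hφ : IsDensityOn μ s φ) :
    DependsOn (fun x => ENNReal.ofReal (φ x)) s :=
  fun _ _ h => by simp only [hφ.dependsOn h]

theorem dependsOn_ofReal_abs_sub (hφ : IsDensityOn μ s φ) (hψ : IsDensityOn μ s ψ) :
    DependsOn (fun x => ENNReal.ofReal |φ x - ψ x|) s :=
  fun _ _ h => by simp only [hφ.dependsOn h, hψ.dependsOn h]

theorem mixture {κ : Type*} {u : Finset κ} {w : κ → ℝ} (hw : ∀ i ∈ u, 0 ≤ w i)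
    (hw1 : ∑ i ∈ u, w i = 1) {φ : κ → (∀ i, X i) → ℝ} (hφ : ∀ i ∈ u, IsDensityOn μ s (φ i)) :
    IsDensityOn μ s fun x => ∑ i ∈ u, w i * φ i x where
  nonneg x := sum_nonneg fun i hi => mul_nonneg (hw i hi) ((hφ i hi).nonneg x)
  measurable := Finset.measurable_sum _ fun i hi => (hφ i hi).measurable.const_mul _
  dependsOn x y h := sum_congr rfl fun i hi => by rw [(hφ i hi).dependsOn h]
  lmarginal_eq_one := by
    have hsplit : (fun x => ENNReal.ofReal (∑ i ∈ u, w i * φ i x))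
        = fun x => ∑ i ∈ u, ENNReal.ofReal (w i) * ENNReal.ofReal (φ i x) := by
      funext x
      rw [ENNReal.ofReal_sum_of_nonneg fun i hi => mul_nonneg (hw i hi) ((hφ i hi).nonneg x)]
      exact sum_congr rfl fun i hi => ENNReal.ofReal_mul (hw i hi)
    funext x
    rw [hsplit, lmarginal_finset_sum u fun i hi => (hφ i hi).measurable_ofReal.const_mul _,
      sum_congr rfl fun i hi => by
        rw [lmarginal_const_mul _ (hφ i hi).measurable_ofReal, (hφ i hi).lmarginal_eq_one,
          Pi.one_apply, mul_one],
      ← ENNReal.ofReal_sum_of_nonneg hw, hw1, ENNReal.ofReal_one, Pi.one_apply]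

variable [∀ i, SigmaFinite (μ i)]

theorem mul (hφ : IsDensityOn μ s φ) (hψ : IsDensityOn μ t ψ) (hst : Disjoint s t) :
    IsDensityOn μ (s ∪ t) fun x => φ x * ψ x where
  nonneg x := mul_nonneg (hφ.nonneg x) (hψ.nonneg x)
  measurable := hφ.measurable.mul hψ.measurable
  dependsOn x y h := by
    dsimp only
    rw [hφ.dependsOn fun i hi => h i (by simp [hi]), hψ.dependsOn fun i hi => h i (by simp [hi])]
  lmarginal_eq_one := by
    have hinner : ∫⋯∫⁻_t, (fun x => ENNReal.ofReal (φ x) * ENNReal.ofReal (ψ x)) ∂μ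
        = fun x => ENNReal.ofReal (φ x) := by
      funext x
      rw [lmarginal_mul_left_of_dependsOn
          (hφ.dependsOn_ofReal.mono fun i hi => Set.mem_compl (disjoint_left.mp hst hi))
          hψ.measurable_ofReal,
        hψ.lmarginal_eq_one, Pi.one_apply, mul_one]
    simp only [ENNReal.ofReal_mul (hφ.nonneg _)]
    rw [lmarginal_union μ (fun x => ENNReal.ofReal (φ x) * ENNReal.ofReal (ψ x))
        (hφ.measurable_ofReal.mul hψ.measurable_ofReal) hst, hinner,
      hφ.lmarginal_eq_one]

theorem prod {κ : Type*} [DecidableEq κ] {u : Finset κ} {s : κ → Finset δ}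
    (hs : (u : Set κ).PairwiseDisjoint s) {φ : κ → (∀ i, X i) → ℝ}
    (hφ : ∀ i ∈ u, IsDensityOn μ (s i) (φ i)) :
    IsDensityOn μ (u.biUnion s) fun x => ∏ i ∈ u, φ i x := by
  induction u using Finset.induction_on with
  | empty =>
    exact ⟨fun _ => zero_le_one, measurable_const, fun _ _ _ => rfl, by simp; rfl⟩
  | insert a u ha ih =>
    rw [coe_insert, Set.pairwiseDisjoint_insert_of_notMem ha] at hs
    simp only [prod_insert ha, biUnion_insert]
    exact (hφ a (mem_insert_self a u)).mul (ih hs.1 fun i hi => hφ i (mem_insert_of_mem hi))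
      ((disjoint_biUnion_right _ _ _).mpr hs.2)

end IsDensityOn

theorem lmarginal_abs_sum_mul_sub_sum_mul_le {κ : Type*} {u : Finset κ} {w w' : κ → ℝ}
    (hw : ∀ i ∈ u, 0 ≤ w i) {φ ψ : κ → (∀ i, X i) → ℝ} (hφ : ∀ i ∈ u, IsDensityOn μ s (φ i))
    (hψ : ∀ i ∈ u, IsDensityOn μ s (ψ i)) {C : κ → ℝ≥0∞}
    (hC : ∀ i ∈ u, ∀ x, (∫⋯∫⁻_s, (fun y => ENNReal.ofReal |φ i y - ψ i y|) ∂μ) x ≤ C i)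
    (x : ∀ i, X i) :
    (∫⋯∫⁻_s, (fun y => ENNReal.ofReal |∑ i ∈ u, w i * φ i y - ∑ i ∈ u, w' i * ψ i y|) ∂μ) x
      ≤ ∑ i ∈ u, (ENNReal.ofReal (w i) * C i + ENNReal.ofReal |w' i - w i|) := by
  have hpoint : (fun y => ENNReal.ofReal |∑ i ∈ u, w i * φ i y - ∑ i ∈ u, w' i * ψ i y|)
      ≤ fun y => ∑ i ∈ u, (ENNReal.ofReal (w i) * ENNReal.ofReal |φ i y - ψ i y|
        + ENNReal.ofReal |w' i - w i| * ENNReal.ofReal (ψ i y)) := fun y => by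
    have hterm : ∀ i ∈ u, 0 ≤ w i * |φ i y - ψ i y| + |w' i - w i| * ψ i y := fun i hi =>
      add_nonneg (mul_nonneg (hw i hi) (abs_nonneg _))
        (mul_nonneg (abs_nonneg _) ((hψ i hi).nonneg y))
    calc ENNReal.ofReal |∑ i ∈ u, w i * φ i y - ∑ i ∈ u, w' i * ψ i y|
        ≤ ENNReal.ofReal (∑ i ∈ u, (w i * |φ i y - ψ i y| + |w' i - w i| * ψ i y)) := by
          refine ENNReal.ofReal_le_ofReal ?_
          rw [← sum_sub_distrib]
          refine (abs_sum_le_sum_abs _ _).trans (sum_le_sum fun i hi => ?_)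
          rw [abs_sub_comm (w' i)]
          exact abs_mul_sub_mul_le (hw i hi) ((hψ i hi).nonneg y)
      _ = _ := by
          rw [ENNReal.ofReal_sum_of_nonneg hterm]
          refine sum_congr rfl fun i hi => ?_
          rw [ENNReal.ofReal_add (mul_nonneg (hw i hi) (abs_nonneg _))
              (mul_nonneg (abs_nonneg _) ((hψ i hi).nonneg y)),
            ENNReal.ofReal_mul (hw i hi), ENNReal.ofReal_mul (abs_nonneg _)]
  have hm : ∀ i ∈ u, Measurable fun y => ENNReal.ofReal (w i) * ENNReal.ofReal |φ i y - ψ i y| :=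
    fun i hi => ((hφ i hi).measurable_ofReal_abs_sub (hψ i hi)).const_mul _
  have hm' : ∀ i ∈ u, Measurable fun y => ENNReal.ofReal (w i) * ENNReal.ofReal |φ i y - ψ i y|
      + ENNReal.ofReal |w' i - w i| * ENNReal.ofReal (ψ i y) :=
    fun i hi => (hm i hi).add ((hψ i hi).measurable_ofReal.const_mul _)
  refine (lmarginal_mono hpoint x).trans ?_
  rw [lmarginal_finset_sum u hm']
  refine sum_le_sum fun i hi => ?_
  rw [lmarginal_add_left (hm i hi),
    lmarginal_const_mul _ ((hφ i hi).measurable_ofReal_abs_sub (hψ i hi)),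
    lmarginal_const_mul _ (hψ i hi).measurable_ofReal, (hψ i hi).lmarginal_eq_one, Pi.one_apply,
    mul_one]
  gcongr
  exact hC i hi x

variable [∀ i, SigmaFinite (μ i)]

theorem lmarginal_abs_mul_sub_mul_le {φ ψ φ' ψ' : (∀ i, X i) → ℝ}
    (hφ : IsDensityOn μ s φ) (hψ : IsDensityOn μ s ψ) (hφ' : IsDensityOn μ t φ')
    (hψ' : IsDensityOn μ t ψ') (hst : Disjoint s t) {C D : ℝ≥0∞}
    (hC : ∀ x, (∫⋯∫⁻_s, (fun y => ENNReal.ofReal |φ y - ψ y|) ∂μ) x ≤ C)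
    (hD : ∀ x, (∫⋯∫⁻_t, (fun y => ENNReal.ofReal |φ' y - ψ' y|) ∂μ) x ≤ D) (x : ∀ i, X i) :
    (∫⋯∫⁻_(s ∪ t), (fun y => ENNReal.ofReal |φ y * φ' y - ψ y * ψ' y|) ∂μ) x ≤ C + D := by
  set G : (∀ i, X i) → ℝ≥0∞ := fun y =>
    ENNReal.ofReal (φ y) * ENNReal.ofReal |φ' y - ψ' y| +
      ENNReal.ofReal |φ y - ψ y| * ENNReal.ofReal (ψ' y)
  have hpoint : (fun y => ENNReal.ofReal |φ y * φ' y - ψ y * ψ' y|) ≤ G := fun y => by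
    simp only [G, ← ENNReal.ofReal_mul (hφ.nonneg y), ← ENNReal.ofReal_mul (abs_nonneg _),
      ← ENNReal.ofReal_add (mul_nonneg (hφ.nonneg y) (abs_nonneg _))
        (mul_nonneg (abs_nonneg _) (hψ'.nonneg y))]
    exact ENNReal.ofReal_le_ofReal (abs_mul_sub_mul_le (hφ.nonneg y) (hψ'.nonneg y))
  have hm₁ : Measurable fun y => ENNReal.ofReal (φ y) * ENNReal.ofReal |φ' y - ψ' y| :=
    hφ.measurable_ofReal.mul (hφ'.measurable_ofReal_abs_sub hψ')
  have hGm : Measurable G := hm₁.add ((hφ.measurable_ofReal_abs_sub hψ).mul hψ'.measurable_ofReal)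
  have hcompl : ∀ {f : (∀ i, X i) → ℝ≥0∞}, DependsOn f s → DependsOn f (↑t)ᶜ := fun hf =>
    hf.mono fun i hi => Set.mem_compl (disjoint_left.mp hst hi)
  have hinner : ∫⋯∫⁻_t, G ∂μ ≤ fun y => ENNReal.ofReal (φ y) * D + ENNReal.ofReal |φ y - ψ y| :=
    fun y => by
      rw [lmarginal_add_left hm₁,
        lmarginal_mul_left_of_dependsOn (hcompl hφ.dependsOn_ofReal)
          (hφ'.measurable_ofReal_abs_sub hψ'),
        lmarginal_mul_left_of_dependsOn (hcompl (hφ.dependsOn_ofReal_abs_sub hψ))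
          hψ'.measurable_ofReal,
        hψ'.lmarginal_eq_one, Pi.one_apply, mul_one]
      beta_reduce
      gcongr
      exact hD y
  have hm₂ : Measurable fun y => ENNReal.ofReal (φ y) * D := hφ.measurable_ofReal.mul_const D
  calc (∫⋯∫⁻_(s ∪ t), (fun y => ENNReal.ofReal |φ y * φ' y - ψ y * ψ' y|) ∂μ) x
      ≤ (∫⋯∫⁻_s, ∫⋯∫⁻_t, G ∂μ ∂μ) x := by
        rw [← lmarginal_union μ G hGm hst]
        exact lmarginal_mono hpoint x
    _ ≤ (∫⋯∫⁻_s, (fun y => ENNReal.ofReal (φ y) * D + ENNReal.ofReal |φ y - ψ y|) ∂μ) x :=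
        lmarginal_mono hinner x
    _ ≤ C + D := by
        rw [lmarginal_add_left hm₂]
        simp only [mul_comm _ D]
        rw [lmarginal_const_mul D hφ.measurable_ofReal, hφ.lmarginal_eq_one, Pi.one_apply,
          mul_one, add_comm C]
        gcongr
        exact hC x

theorem lmarginal_abs_prod_sub_prod_le {κ : Type*} [DecidableEq κ] {u : Finset κ}
    {s : κ → Finset δ} (hs : (u : Set κ).PairwiseDisjoint s) {φ ψ : κ → (∀ i, X i) → ℝ}
    (hφ : ∀ i ∈ u, IsDensityOn μ (s i) (φ i)) (hψ : ∀ i ∈ u, IsDensityOn μ (s i) (ψ i))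
    {C : κ → ℝ≥0∞}
    (hC : ∀ i ∈ u, ∀ x, (∫⋯∫⁻_(s i), (fun y => ENNReal.ofReal |φ i y - ψ i y|) ∂μ) x ≤ C i)
    (x : ∀ i, X i) :
    (∫⋯∫⁻_(u.biUnion s), (fun y => ENNReal.ofReal |∏ i ∈ u, φ i y - ∏ i ∈ u, ψ i y|) ∂μ) x
      ≤ ∑ i ∈ u, C i := by
  induction u using Finset.induction_on generalizing x with
  | empty => simp
  | insert a u ha ih =>
    rw [coe_insert, Set.pairwiseDisjoint_insert_of_notMem ha] at hs
    have hφu := fun i hi => hφ i (mem_insert_of_mem hi)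
    have hψu := fun i hi => hψ i (mem_insert_of_mem hi)
    simp only [prod_insert ha, biUnion_insert, sum_insert ha]
    exact lmarginal_abs_mul_sub_mul_le (hφ a (mem_insert_self a u)) (hψ a (mem_insert_self a u))
      (IsDensityOn.prod hs.1 hφu) (IsDensityOn.prod hs.1 hψu)
      ((disjoint_biUnion_right _ _ _).mpr hs.2) (hC a (mem_insert_self a u))
      (ih hs.1 hφu hψu fun i hi => hC i (mem_insert_of_mem hi)) x

end Density

end MeasureTheory

namespace SPN

section Structure

variable {n : ℕ} {X : Type}

theorem scope_sum_eq {m : ℕ} {w : Fin m → ℝ} {c : Fin m → SPN n X}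
    (hc : ∀ i j, (c i).scope = (c j).scope) (i : Fin m) : (sum m w c).scope = (c i).scope := by
  ext j
  simp only [scope, mem_biUnion, mem_univ, true_and]
  exact ⟨fun ⟨i', hj⟩ => hc i' i ▸ hj, fun hj => ⟨i, hj⟩⟩

theorem length_leaves (t : SPN n X) : t.leaves.length = t.numLeaves := by
  induction t with
  | leaf => rfl
  | _ => simp_all [leaves, numLeaves, List.length_flatten, List.sum_ofFn]

theorem length_pathWeights (t : SPN n X) : t.pathWeights.length = t.numLeaves := by
  induction t <;> simp_all [pathWeights, numLeaves, List.length_flatten, List.sum_ofFn]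

theorem length_weightsList (t : SPN n X) : t.weightsList.length = t.numWeights := by
  induction t <;> simp_all [weightsList, numWeights, List.length_flatten, List.sum_ofFn]

namespace SameStruct

variable {t t' : SPN n X}

theorem scope_eq (h : SameStruct t t') : t.scope = t'.scope := by
  induction h <;> simp_all [scope]

theorem numLeaves_eq (h : SameStruct t t') : t.numLeaves = t'.numLeaves := by
  induction h <;> simp_all [numLeaves]

theorem numWeights_eq (h : SameStruct t t') : t.numWeights = t'.numWeights := by
  induction h <;> simp_all [numWeights]

-- `LeafT` is not reducible, so `simp` and `rw` do not see `List (LeafT n X)` as a list of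
-- `Sigma`s; hence the `erw`s here and below.
theorem map_fst_leaves (h : SameStruct t t') :
    t.leaves.map Sigma.fst = t'.leaves.map Sigma.fst := by
  induction h with
  | leaf => rfl
  | prod _ _ _ _ ih | sum _ _ _ _ _ _ ih =>
    simp only [leaves]
    erw [List.map_flatten, List.map_flatten, List.map_ofFn, List.map_ofFn]
    exact congrArg List.flatten (congrArg List.ofFn (funext ih))

theorem fst_getElem!_leaves (h : SameStruct t t') {i : ℕ} (hi : i < t.numLeaves) :
    t'.leaves[i]!.1 = t.leaves[i]!.1 := by
  have hi' : i < t'.leaves.length := by rwa [length_leaves, ← h.numLeaves_eq]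
  rw [← length_leaves] at hi
  rw [getElem!_pos t.leaves i hi, getElem!_pos t'.leaves i hi']
  have := List.getElem_of_eq h.map_fst_leaves (i := i) (by erw [List.length_map]; exact hi)
  erw [List.getElem_map, List.getElem_map] at this
  exact this.symm

end SameStruct

end Structure

section Discrepancy

variable {n : ℕ} {X : Type}

/-- `∑ᵢ Wᵢ F(Lᵢ, L'ᵢ)`, where `Lᵢ` runs over the leaves of `t` with path weights `Wᵢ` and
`L'ᵢ` over the leaves of `t'`, in the same order. -/
noncomputable def weightedLeafSum (F : LeafT n X → LeafT n X → ℝ≥0∞) (t t' : SPN n X) : ℝ≥0∞ :=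
  ((t.pathWeights.zip (t.leaves.zip t'.leaves)).map
    fun p => ENNReal.ofReal p.1 * F p.2.1 p.2.2).sum

noncomputable def weightDiscrepancy (t t' : SPN n X) : ℝ≥0∞ :=
  ((t.weightsList.zip t'.weightsList).map fun p => ENNReal.ofReal |p.2 - p.1|).sum

variable (F : LeafT n X → LeafT n X → ℝ≥0∞)

theorem weightedLeafSum_leaf (d : ℕ) (emb : Fin d ↪ Fin n) (g : (Fin d → X) → ℝ) (d' : ℕ)
    (emb' : Fin d' ↪ Fin n) (g' : (Fin d' → X) → ℝ) :
    weightedLeafSum F (leaf d emb g) (leaf d' emb' g') = F ⟨d, emb, g⟩ ⟨d', emb', g'⟩ := by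
  change ENNReal.ofReal 1 * _ + 0 = _
  rw [ENNReal.ofReal_one, one_mul, add_zero]

theorem weightedLeafSum_prod {m : ℕ} {c c' : Fin m → SPN n X}
    (h : ∀ i, (c i).numLeaves = (c' i).numLeaves) :
    weightedLeafSum F (prod m c) (prod m c') = ∑ i, weightedLeafSum F (c i) (c' i) := by
  simp only [weightedLeafSum, pathWeights, leaves]
  rw [List.zip_flatten_ofFn _ _ fun i => by rw [length_leaves, length_leaves, h],
    List.sum_map_zip_flatten_ofFn _ _ _ fun i => by
      rw [List.length_zip, length_pathWeights, length_leaves, length_leaves, h, min_self]]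

theorem weightedLeafSum_sum {m : ℕ} {w : Fin m → ℝ} (hw : ∀ i, 0 ≤ w i) (w' : Fin m → ℝ)
    {c c' : Fin m → SPN n X} (h : ∀ i, (c i).numLeaves = (c' i).numLeaves) :
    weightedLeafSum F (sum m w c) (sum m w' c')
      = ∑ i, ENNReal.ofReal (w i) * weightedLeafSum F (c i) (c' i) := by
  simp only [weightedLeafSum, pathWeights, leaves]
  rw [List.zip_flatten_ofFn _ _ fun i => by rw [length_leaves, length_leaves, h],
    List.sum_map_zip_flatten_ofFn _ _ _ fun i => by
      rw [List.length_map, List.length_zip, length_pathWeights, length_leaves, length_leaves, h,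
        min_self]]
  refine sum_congr rfl fun i _ => ?_
  rw [List.zip_map_left, List.map_map, ← List.sum_map_mul_left]
  congr 1
  refine List.map_congr_left fun p _ => ?_
  simp only [Function.comp_apply, Prod.map_fst, Prod.map_snd, id_eq,
    ENNReal.ofReal_mul (hw i), mul_assoc]

theorem weightedLeafSum_eq_sum_range {t t' : SPN n X} (h : t.numLeaves = t'.numLeaves) :
    weightedLeafSum F t t' = ∑ i ∈ range t.numLeaves,
      ENNReal.ofReal t.pathWeights[i]! * F t.leaves[i]! t'.leaves[i]! := by
  rw [weightedLeafSum, List.sum_map_zip_eq_sum_range _ (by simp [length_pathWeights,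
    length_leaves, h]), length_pathWeights]
  refine sum_congr rfl fun i hi => ?_
  rw [List.getElem!_zip (by rw [length_leaves]; simpa using hi)
    (by rw [length_leaves, ← h]; simpa using hi)]

theorem weightDiscrepancy_leaf (d : ℕ) (emb : Fin d ↪ Fin n) (g : (Fin d → X) → ℝ) (d' : ℕ)
    (emb' : Fin d' ↪ Fin n) (g' : (Fin d' → X) → ℝ) :
    weightDiscrepancy (leaf d emb g) (leaf d' emb' g') = 0 := rfl

theorem weightDiscrepancy_prod {m : ℕ} {c c' : Fin m → SPN n X}
    (h : ∀ i, (c i).numWeights = (c' i).numWeights) :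
    weightDiscrepancy (prod m c) (prod m c') = ∑ i, weightDiscrepancy (c i) (c' i) :=
  List.sum_map_zip_flatten_ofFn _ _ _ fun i => by rw [length_weightsList, length_weightsList, h]

theorem weightDiscrepancy_sum {m : ℕ} (w w' : Fin m → ℝ) {c c' : Fin m → SPN n X}
    (h : ∀ i, (c i).numWeights = (c' i).numWeights) :
    weightDiscrepancy (sum m w c) (sum m w' c')
      = ∑ i, ENNReal.ofReal |w' i - w i| + ∑ i, weightDiscrepancy (c i) (c' i) := by
  simp only [weightDiscrepancy, weightsList]
  rw [List.zip_append (by simp), List.map_append, List.sum_append,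
    List.sum_map_zip_flatten_ofFn _ _ _ fun i => by rw [length_weightsList, length_weightsList, h],
    List.zip_ofFn, List.map_ofFn, List.sum_ofFn]
  rfl

theorem weightDiscrepancy_le {t t' : SPN n X} (h : t.numWeights = t'.numWeights) {α : ℝ}
    (hw : ∀ j, j < t.weightsList.length → |t'.weightsList[j]! - t.weightsList[j]!| ≤ α) :
    weightDiscrepancy t t' ≤ ENNReal.ofReal (t.numWeights * α) := by
  rw [weightDiscrepancy, List.sum_map_zip_eq_sum_range _ (by simp [length_weightsList, h]),
    length_weightsList, ENNReal.ofReal_mul (Nat.cast_nonneg _), ENNReal.ofReal_natCast]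
  refine (sum_le_sum fun j hj => ENNReal.ofReal_le_ofReal (hw j ?_)).trans (by simp)
  rwa [length_weightsList, ← mem_range]

end Discrepancy

variable {n : ℕ} {X : Type} [MeasurableSpace X] {ν : Measure X} [SigmaFinite ν]

section Density

theorem WF.isDensityOn_leaf {d : ℕ} {emb : Fin d ↪ Fin n} {g : (Fin d → X) → ℝ}
    (hg : (leaf d emb g).WF ν) :
    IsDensityOn (fun _ => ν) (univ.map emb) fun x => g fun j => x (emb j) where
  nonneg _ := hg.1 _
  measurable := hg.2.1.comp (measurable_pi_lambda _ fun j => measurable_pi_apply _)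
  dependsOn x y h := congrArg g (funext fun j => h _ (by simp))
  lmarginal_eq_one := by
    funext x
    rw [Pi.one_apply, ← ENNReal.ofReal_one, ← hg.2.2, ofReal_integral_eq_lintegral_ofReal
      (integrable_of_integral_eq_one hg.2.2) (Filter.Eventually.of_forall hg.1)]
    exact lmarginal_map_univ_comp emb (ENNReal.measurable_ofReal.comp hg.2.1) x

theorem WF.isDensityOn {t : SPN n X} (ht : t.WF ν) :
    IsDensityOn (fun _ => ν) t.scope t.density := by
  induction t with
  | leaf d emb g => exact ht.isDensityOn_leaf
  | prod m c ih =>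
    exact IsDensityOn.prod (fun i _ j _ hij => ht.2.2 i j hij) fun i _ => ih i (ht.2.1 i)
  | sum m w c ih =>
    obtain ⟨hm, hc, hscope, hw, hw1⟩ := ht
    obtain ⟨i₀⟩ : Nonempty (Fin m) := ⟨⟨0, hm⟩⟩
    rw [scope_sum_eq hscope i₀]
    exact IsDensityOn.mixture (fun i _ => hw i) hw1 fun i _ => hscope i i₀ ▸ ih i (hc i)

noncomputable def leafL1Dist (ν : Measure X) [SigmaFinite ν] (L L' : LeafT n X) : ℝ≥0∞ :=
  ENNReal.ofReal (2 * leafTV ν L L')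

theorem leafTV_mk {d : ℕ} {emb emb' : Fin d ↪ Fin n} {g g' : (Fin d → X) → ℝ} :
    leafTV ν ⟨d, emb, g⟩ ⟨d, emb', g'⟩ = 1 / 2 * ∫ y, |g y - g' y| ∂Measure.pi fun _ => ν :=
  dif_pos rfl

theorem lintegral_abs_sub_eq_leafL1Dist {d : ℕ} {emb : Fin d ↪ Fin n} {g g' : (Fin d → X) → ℝ}
    (hg : (leaf d emb g).WF ν) (hg' : (leaf d emb g').WF ν) :
    ∫⁻ y, ENNReal.ofReal |g y - g' y| ∂Measure.pi (fun _ => ν)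
      = leafL1Dist ν ⟨d, emb, g⟩ ⟨d, emb, g'⟩ := by
  have hint : Integrable (fun y => |g y - g' y|) (Measure.pi fun _ => ν) :=
    ((integrable_of_integral_eq_one hg.2.2).sub (integrable_of_integral_eq_one hg'.2.2)).abs
  unfold leafL1Dist
  rw [leafTV_mk, ← mul_assoc, mul_one_div_cancel two_ne_zero, one_mul,
    ofReal_integral_eq_lintegral_ofReal hint (Filter.Eventually.of_forall fun _ => abs_nonneg _)]

theorem SameStruct.lmarginal_abs_density_sub_le {t t' : SPN n X} (h : SameStruct t t')
    (ht : t.WF ν) (ht' : t'.WF ν) (x : Fin n → X) :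
    (∫⋯∫⁻_t.scope, (fun y => ENNReal.ofReal |t.density y - t'.density y|) ∂fun _ => ν) x
      ≤ weightedLeafSum (leafL1Dist ν) t t' + weightDiscrepancy t t' := by
  induction h generalizing x with
  | leaf d emb g g' =>
    rw [weightedLeafSum_leaf, weightDiscrepancy_leaf, add_zero,
      ← lintegral_abs_sub_eq_leafL1Dist ht ht']
    exact (lmarginal_map_univ_comp (μ := fun _ => ν) emb
      (ENNReal.measurable_ofReal.comp (ht.2.1.sub ht'.2.1).abs) x).le
  | prod m c c' hc ih =>
    rw [weightedLeafSum_prod _ fun i => (hc i).numLeaves_eq,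
      weightDiscrepancy_prod fun i => (hc i).numWeights_eq, ← sum_add_distrib]
    exact lmarginal_abs_prod_sub_prod_le (fun i _ j _ hij => ht.2.2 i j hij)
      (fun i _ => (ht.2.1 i).isDensityOn)
      (fun i _ => (hc i).scope_eq ▸ (ht'.2.1 i).isDensityOn)
      (fun i _ => ih i (ht.2.1 i) (ht'.2.1 i)) x
  | sum m w w' c c' hc ih =>
    obtain ⟨hm, hwf, hscope, hw, hw1⟩ := ht
    obtain ⟨i₀⟩ : Nonempty (Fin m) := ⟨⟨0, hm⟩⟩
    have hscope' : ∀ i, (c i).scope = (c i₀).scope := fun i => hscope i i₀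
    rw [weightedLeafSum_sum _ hw _ fun i => (hc i).numLeaves_eq,
      weightDiscrepancy_sum _ _ fun i => (hc i).numWeights_eq, scope_sum_eq hscope i₀]
    refine (lmarginal_abs_sum_mul_sub_sum_mul_le (fun i _ => hw i)
      (fun i _ => hscope' i ▸ (hwf i).isDensityOn)
      (fun i _ => hscope' i ▸ (hc i).scope_eq ▸ (ht'.2.1 i).isDensityOn)
      (fun i _ => hscope' i ▸ ih i (hwf i) (ht'.2.1 i)) x).trans ?_
    have hw_le_one : ∀ i, ENNReal.ofReal (w i) ≤ 1 := fun i => by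
      rw [← ENNReal.ofReal_one, ← hw1]
      exact ENNReal.ofReal_le_ofReal (single_le_sum (fun j _ => hw j) (mem_univ i))
    calc ∑ i, (ENNReal.ofReal (w i) * (weightedLeafSum (leafL1Dist ν) (c i) (c' i)
          + weightDiscrepancy (c i) (c' i)) + ENNReal.ofReal |w' i - w i|)
        ≤ ∑ i, (ENNReal.ofReal (w i) * weightedLeafSum (leafL1Dist ν) (c i) (c' i)
          + weightDiscrepancy (c i) (c' i) + ENNReal.ofReal |w' i - w i|) := by
          gcongr with i
          rw [mul_add]
          gcongr
          exact mul_le_of_le_one_left zero_le (hw_le_one i)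
      _ = _ := by simp only [sum_add_distrib]; ring

theorem tv_le_of_lintegral_le {f g : (Fin n → X) → ℝ} {R : ℝ} (hR : 0 ≤ R)
    (h : ∫⁻ x, ENNReal.ofReal |f x - g x| ∂Measure.pi (fun _ => ν) ≤ ENNReal.ofReal (2 * R)) :
    tv ν f g ≤ R := by
  have hnorm := norm_integral_le_lintegral_norm (μ := Measure.pi fun _ => ν)
    fun x => |f x - g x|
  simp only [Real.norm_eq_abs, abs_abs] at hnorm
  have hL1 := (le_abs_self _).trans (hnorm.trans (ENNReal.toReal_le_of_le_ofReal (by linarith) h))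
  rw [tv]
  linarith

end Density

section Leaves

theorem WF.of_mem_leaves {t : SPN n X} (ht : t.WF ν) :
    ∀ L ∈ t.leaves, (leaf L.1 L.2.1 L.2.2).WF ν := by
  induction t with
  | leaf d emb g =>
    intro L hL
    obtain rfl : L = ⟨d, emb, g⟩ := List.mem_singleton.mp hL
    exact ht
  | prod m c ih | sum m w c ih =>
    intro L hL
    simp only [leaves, List.mem_flatten, List.mem_ofFn] at hL
    obtain ⟨_, ⟨i, rfl⟩, hL⟩ := hL
    exact ih i (ht.2.1 i) L hL

theorem WF.getElem!_leaves {t : SPN n X} (ht : t.WF ν) {i : ℕ} (hi : i < t.numLeaves) :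
    (leaf t.leaves[i]!.1 t.leaves[i]!.2.1 t.leaves[i]!.2.2).WF ν := by
  rw [← length_leaves] at hi
  rw [getElem!_pos t.leaves i hi]
  exact ht.of_mem_leaves _ (List.getElem_mem hi)

theorem WF.pathWeights_nonneg {t : SPN n X} (ht : t.WF ν) : ∀ r ∈ t.pathWeights, 0 ≤ r := by
  induction t with
  | leaf d emb g => simp [pathWeights]
  | prod m c ih =>
    simp only [pathWeights, List.mem_flatten, List.mem_ofFn]
    rintro r ⟨_, ⟨i, rfl⟩, hr⟩
    exact ih i (ht.2.1 i) r hr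
  | sum m w c ih =>
    simp only [pathWeights, List.mem_flatten, List.mem_ofFn]
    rintro _ ⟨_, ⟨i, rfl⟩, hr⟩
    obtain ⟨r, hr', rfl⟩ := List.mem_map.mp hr
    exact mul_nonneg (ht.2.2.2.1 i) (ih i (ht.2.1 i) r hr')

theorem WF.getElem!_pathWeights_nonneg {t : SPN n X} (ht : t.WF ν) (i : ℕ) :
    0 ≤ t.pathWeights[i]! := by
  by_cases hi : i < t.pathWeights.length
  · rw [getElem!_pos t.pathWeights i hi]
    exact ht.pathWeights_nonneg _ (List.getElem_mem hi)
  · rw [getElem!_neg t.pathWeights i hi]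
    rfl

theorem WF.weightedLeafSum_fst_le {t : SPN n X} (ht : t.WF ν) :
    weightedLeafSum (fun L _ => L.1) t t ≤ t.scope.card := by
  induction t with
  | leaf d emb g => simp [weightedLeafSum_leaf, scope]
  | prod m c ih =>
    rw [weightedLeafSum_prod _ fun _ => rfl, scope,
      card_biUnion fun i _ j _ hij => ht.2.2 i j hij, Nat.cast_sum]
    exact sum_le_sum fun i _ => ih i (ht.2.1 i)
  | sum m w c ih =>
    obtain ⟨hm, hc, hscope, hw, hw1⟩ := ht
    rw [weightedLeafSum_sum _ hw _ fun _ => rfl]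
    calc ∑ i, ENNReal.ofReal (w i) * weightedLeafSum (fun L _ => L.1) (c i) (c i)
        ≤ ∑ i, ENNReal.ofReal (w i) * (sum m w c).scope.card := by
          gcongr with i
          rw [scope_sum_eq hscope i]
          exact ih i (hc i)
      _ = (sum m w c).scope.card := by
          rw [← sum_mul, ← ENNReal.ofReal_sum_of_nonneg fun i _ => hw i, hw1, ENNReal.ofReal_one,
            one_mul]

theorem leafTV_le_one {L L' : LeafT n X} (hL : (leaf L.1 L.2.1 L.2.2).WF ν)
    (hL' : (leaf L'.1 L'.2.1 L'.2.2).WF ν) : leafTV ν L L' ≤ 1 := by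
  obtain ⟨d, emb, g⟩ := L
  obtain ⟨d', emb', g'⟩ := L'
  by_cases h : d' = d
  · subst h
    obtain ⟨hg0, -, hg1⟩ := hL
    obtain ⟨hg'0, -, hg'1⟩ := hL'
    have hint := integrable_of_integral_eq_one hg1
    have hint' := integrable_of_integral_eq_one hg'1
    have hbound : ∫ y, |g y - g' y| ∂Measure.pi (fun _ => ν) ≤ 2 :=
      calc ∫ y, |g y - g' y| ∂Measure.pi (fun _ => ν)
          ≤ ∫ y, (g y + g' y) ∂Measure.pi (fun _ => ν) :=
            integral_mono (hint.sub hint').abs (hint.add hint') fun y =>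
              abs_sub_le_iff.mpr ⟨by linarith [hg'0 y], by linarith [hg0 y]⟩
        _ = 2 := by rw [integral_add hint hint', hg1, hg'1]; norm_num
    rw [leafTV_mk]
    linarith
  · exact (dif_neg h).le

theorem WF.eq_one_of_leaf_zero {emb : Fin 0 ↪ Fin n} {g : (Fin 0 → X) → ℝ}
    (hg : (leaf 0 emb g).WF ν) (y : Fin 0 → X) : g y = 1 := by
  have h := hg.2.2
  rwa [integral_unique, measureReal_def, Measure.pi_univ, univ_eq_empty, prod_empty,
    ENNReal.toReal_one, one_smul, ← Unique.eq_default y] at h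

theorem leafL1Dist_le {L L' : LeafT n X} (hL : (leaf L.1 L.2.1 L.2.2).WF ν)
    (hL' : (leaf L'.1 L'.2.1 L'.2.2).WF ν) (h : L'.1 = L.1) {ε : ℝ} (hε : leafTV ν L L' ≤ ε) :
    leafL1Dist ν L L' ≤ ENNReal.ofReal (2 * ε) * L.1 := by
  obtain ⟨d, emb, g⟩ := L
  obtain ⟨d', emb', g'⟩ := L'
  dsimp only at hL hL' h ⊢
  subst h
  rcases Nat.eq_zero_or_pos d' with rfl | hd
  · have hzero : leafTV ν ⟨0, emb, g⟩ ⟨0, emb', g'⟩ = 0 := by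
      simp [leafTV_mk, hL.eq_one_of_leaf_zero, hL'.eq_one_of_leaf_zero]
    simp [leafL1Dist, hzero]
  · calc leafL1Dist ν ⟨d', emb, g⟩ ⟨d', emb', g'⟩ ≤ ENNReal.ofReal (2 * ε) :=
          ENNReal.ofReal_le_ofReal (by linarith)
      _ ≤ ENNReal.ofReal (2 * ε) * d' :=
          le_mul_of_one_le_right zero_le (by exact_mod_cast hd)

theorem leafL1Dist_le_two {L L' : LeafT n X} (hL : (leaf L.1 L.2.1 L.2.2).WF ν)
    (hL' : (leaf L'.1 L'.2.1 L'.2.2).WF ν) : leafL1Dist ν L L' ≤ 2 := by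
  rw [leafL1Dist, ← ENNReal.ofReal_ofNat 2]
  exact ENNReal.ofReal_le_ofReal (by linarith [leafTV_le_one hL hL'])

theorem SameStruct.weightedLeafSum_leafL1Dist_le {t t' : SPN n X} (h : SameStruct t t')
    (ht : t.WF ν) (ht' : t'.WF ν) {N : Finset ℕ} (hN : N ⊆ range t.numLeaves) {ε : ℝ}
    (hε : 0 ≤ ε)
    (hleaf : ∀ i, i < t.leaves.length → i ∉ N → leafTV ν t.leaves[i]! t'.leaves[i]! ≤ ε) :
    weightedLeafSum (leafL1Dist ν) t t'
      ≤ ENNReal.ofReal (2 * (t.scope.card * ε + ∑ i ∈ N, t.pathWeights[i]!)) := by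
  have hwf : ∀ i ∈ range t.numLeaves, _ := fun i hi => ht.getElem!_leaves (mem_range.mp hi)
  have hwf' : ∀ i ∈ range t.numLeaves, _ := fun i hi =>
    ht'.getElem!_leaves (h.numLeaves_eq ▸ mem_range.mp hi)
  have hW : ∀ i ∈ N, 0 ≤ t.pathWeights[i]! := fun i _ => ht.getElem!_pathWeights_nonneg i
  rw [weightedLeafSum_eq_sum_range _ h.numLeaves_eq, ← sum_sdiff hN, mul_add,
    ENNReal.ofReal_add (by positivity) (mul_nonneg zero_le_two (sum_nonneg hW)),
    mul_sum, ENNReal.ofReal_sum_of_nonneg fun i hi => mul_nonneg zero_le_two (hW i hi),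
    mul_left_comm (2 : ℝ), ENNReal.ofReal_mul (Nat.cast_nonneg _), ENNReal.ofReal_natCast]
  refine add_le_add ?_ ?_
  · calc ∑ i ∈ range t.numLeaves \ N,
          ENNReal.ofReal t.pathWeights[i]! * leafL1Dist ν t.leaves[i]! t'.leaves[i]!
        ≤ ∑ i ∈ range t.numLeaves,
          ENNReal.ofReal (2 * ε) * (ENNReal.ofReal t.pathWeights[i]! * t.leaves[i]!.1) := by
          refine (sum_le_sum fun i hi => ?_).trans (sum_le_sum_of_subset sdiff_subset)
          obtain ⟨hi, hiN⟩ := mem_sdiff.mp hi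
          rw [mul_left_comm]
          gcongr
          exact leafL1Dist_le (hwf i hi) (hwf' i hi) (h.fst_getElem!_leaves (mem_range.mp hi))
            (hleaf i (by rw [length_leaves]; exact mem_range.mp hi) hiN)
      _ ≤ t.scope.card * ENNReal.ofReal (2 * ε) := by
          rw [← mul_sum, ← weightedLeafSum_eq_sum_range (fun L _ => L.1) rfl, mul_comm]
          gcongr
          exact ht.weightedLeafSum_fst_le
  · refine sum_le_sum fun i hi => ?_
    rw [ENNReal.ofReal_mul zero_le_two, ENNReal.ofReal_ofNat, mul_comm]
    gcongr
    exact leafL1Dist_le_two (hwf i (hN hi)) (hwf' i (hN hi))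

end Leaves

end SPN

/-- Let `f` and `fh` be probability densities represented by two
tree-structured SPNs over an `n`-dimensional product domain that have the same structure,
with `k` mixing weights and `e` leaves in total.  Let `N` be a subset of the leaf indices and
`ε', α ∈ [0,1]`.  If every pair of corresponding leaves with index outside `N` is `ε'`-close
in total variation distance and every pair of corresponding mixing weights differs by at most
`α`, then `TV(f, f̂) ≤ ∑_{i ∈ N} Wᵢ + n ε' + k α / 2`, where `Wᵢ` is the path weight of the
`i`-th leaf of `f`. -/
theorem stmt5 {n : ℕ} {X : Type} [MeasurableSpace X] (ν : Measure X) [SigmaFinite ν]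
    (f fh : SPN n X) (hf : f.WF ν) (hfh : fh.WF ν)
    (hscope : f.scope = Finset.univ) (hstruct : SPN.SameStruct f fh)
    (e k : ℕ) (he : f.numLeaves = e) (hk : f.numWeights = k)
    (N : Finset ℕ) (hN : N ⊆ Finset.range e)
    (ε' α : ℝ) (hε' : ε' ∈ Set.Icc (0:ℝ) 1) (hα : α ∈ Set.Icc (0:ℝ) 1)
    (hleaf : ∀ i, i < f.leaves.length → i ∉ N →
      SPN.leafTV ν (f.leaves[i]!) (fh.leaves[i]!) ≤ ε')
    (hw : ∀ j, j < f.weightsList.length →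
      |fh.weightsList[j]! - f.weightsList[j]!| ≤ α) :
    SPN.tv ν f.density fh.density ≤
      (∑ i ∈ N, f.pathWeights[i]!) + n * ε' + k * α / 2 := by
  subst he hk
  have hW := sum_nonneg fun i (_ : i ∈ N) => hf.getElem!_pathWeights_nonneg i
  have hε'0 := hε'.1
  have hα0 := hα.1
  refine SPN.tv_le_of_lintegral_le (by positivity) ?_
  calc ∫⁻ x, ENNReal.ofReal |f.density x - fh.density x| ∂Measure.pi (fun _ => ν)
      ≤ SPN.weightedLeafSum (SPN.leafL1Dist ν) f fh + SPN.weightDiscrepancy f fh :=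
        lintegral_le_of_lmarginal_univ_le (hscope ▸ hstruct.lmarginal_abs_density_sub_le hf hfh)
    _ ≤ ENNReal.ofReal (2 * (f.scope.card * ε' + ∑ i ∈ N, f.pathWeights[i]!))
          + ENNReal.ofReal (f.numWeights * α) :=
        add_le_add (hstruct.weightedLeafSum_leafL1Dist_le hf hfh hN hε'0 hleaf)
          (SPN.weightDiscrepancy_le hstruct.numWeights_eq hw)
    _ = ENNReal.ofReal (2 * ((∑ i ∈ N, f.pathWeights[i]!) + n * ε' + f.numWeights * α / 2)) := by
        rw [← ENNReal.ofReal_add (by positivity) (by positivity), hscope, card_univ,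
          Fintype.card_fin]
        ring_nf
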